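/- Let G be a group in the class 𝒞 (with respect to generating set X and subset W) and let w, g be elements of G such that w ∈ W, C(w) is abelian and g ∈ C(w). If C(g) is non-abelian then g ∈ O(w), there exists w₀ ∈ W ∩ O(w) with C(g) = C(w₀), and C(g) = Z(g) × O(g) is a canonical subgroup with Z(g) ≤ O(w). -/

import Mathlib

namespace PaperBase

/-- A subgroup is abelian: all its elements commute. -/
def IsAbelianSub {G : Type*} [Group G] (H : Subgroup G) : Prop :=
  ∀ a ∈ H, ∀ b ∈ H, a * b = b * a

/-- `L` is the internal direct product of its subgroups `H` and `K`. -/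
def IsIDP {G : Type*} [Group G] (H K L : Subgroup G) : Prop :=
  (∀ h ∈ H, ∀ k ∈ K, Commute h k) ∧ H ⊓ K = ⊥ ∧ H ⊔ K = L

/-- `L` is the internal direct product of the family of subgroups `H i`. -/
def IsIDPFamily {G : Type*} [Group G] {ι : Type*} (H : ι → Subgroup G)
    (L : Subgroup G) : Prop :=
  (∀ i j, i ≠ j → ∀ x ∈ H i, ∀ y ∈ H j, Commute x y) ∧
  (∀ i, H i ⊓ (⨆ (j) (_ : j ≠ i), H j) = ⊥) ∧
  (⨆ i, H i) = L

/-- The conjugate `h H h⁻¹` of a subgroup. -/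
def conjSub {G : Type*} [Group G] (h : G) (H : Subgroup G) : Subgroup G :=
  H.map (MulAut.conj h).toMonoidHom

/-- Two subgroups are conjugate. -/
def AreConjSub {G : Type*} [Group G] (H K : Subgroup G) : Prop :=
  ∃ h : G, K = conjSub h H

/-- The big powers (BP) property: for every generic tuple `u` of non-trivial elements
there is a bound `n` such that `u 0 ^ α 0 * ⋯ * u k ^ α k = 1` with all `α i > 0`
forces some `α i < n`. -/
def HasBigPowers (G : Type*) [Group G] : Prop :=
  ∀ (k : ℕ) (u : Fin (k + 1) → G), (∀ i, u i ≠ 1) →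
    (∀ i : Fin k, ¬ Commute (u i.castSucc) (u i.succ)) →
    ∃ n : ℕ, ∀ α : Fin (k + 1) → ℕ, (∀ i, 0 < α i) →
      (List.ofFn fun i => u i ^ α i).prod = 1 → ∃ i, α i < n

/-- Unique roots. -/
def HasUniqueRoots (G : Type*) [Group G] : Prop :=
  ∀ (g h : G) (n : ℕ), n ≠ 0 → g ^ n = h ^ n → g = h

/-- A root element: not a proper power. -/
def IsRootElement {G : Type*} [Group G] (g : G) : Prop :=
  ¬ ∃ (h : G) (n : ℕ), 2 ≤ n ∧ g = h ^ n

/-- A canonical subgroup with respect to the generating set `X`. -/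
def IsCanonical {G : Type*} [Group G] (X : Set G) (H : Subgroup G) : Prop :=
  ∃ Y ⊆ X, H = Subgroup.closure Y

/-- `Y` is a minimal (by inclusion) subset of `X` satisfying `p`. -/
def MinimalWith {G : Type*} [Group G] (X : Set G) (p : Set G → Prop)
    (Y : Set G) : Prop :=
  Y ⊆ X ∧ p Y ∧ ∀ Y' ⊆ Y, p Y' → Y' = Y

/-- The centre of a subgroup `H`, viewed as a subgroup of the ambient group. -/
def subCenter {G : Type*} [Group G] (H : Subgroup G) : Subgroup G :=
  H ⊓ Subgroup.centralizer (H : Set G)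

/-- The generators `K` of a prospective subgroup `O(w)` commute with, and avoid, every
minimal subset `Y ⊆ X` satisfying `cond`. -/
def OProp {G : Type*} [Group G] (X : Set G) (cond : Set G → Prop) (K : Set G) : Prop :=
  ∀ Y : Set G, MinimalWith X cond Y → ∀ o ∈ K, (∀ y ∈ Y, Commute o y) ∧ o ∉ Y

/-- `H` is the maximal canonical subgroup whose generators commute with, and avoid,
every minimal subset `Y ⊆ X` satisfying `cond`. -/
def MaxCanonicalWith {G : Type*} [Group G] (X : Set G) (cond : Set G → Prop)
    (H : Subgroup G) : Prop :=
  ∃ K ⊆ X, H = Subgroup.closure K ∧ OProp X cond K ∧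
    ∀ K' ⊆ X, OProp X cond K' → Subgroup.closure K' ≤ H

/-- Conditions (C1)--(C8) for membership in the class 𝒞, with respect to the generating
set `X`, the set of representatives `W` and the centraliser decompositions `Z`, `O`. -/
structure ClassCWith (G : Type*) [Group G] (X W : Set G)
    (Z O : G → Subgroup G) : Prop where
  gen : Subgroup.closure X = ⊤
  /-- (C1) -/
  torsionFree : ∀ g : G, g ≠ 1 → ¬ IsOfFinOrder g
  /-- (C2) -/
  bigPowers : HasBigPowers G
  /-- (C3) -/
  uniqueRoots : HasUniqueRoots G
  /-- (C4)(a) -/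
  c4a : ∀ Y Y' : Set G, Y ⊆ X → Y' ⊆ X → Disjoint Y Y' →
    (∀ y ∈ Y, ∀ y' ∈ Y', Commute y y') →
    IsIDP (Subgroup.closure Y) (Subgroup.closure Y') (Subgroup.closure (Y ∪ Y'))
  /-- (C4)(b) -/
  c4b : ∀ x ∈ X, ∀ Y ⊆ X, x ∈ Subgroup.closure Y → x ∈ Y
  /-- (C6)(a) -/
  c6a : ∀ g : G, ∃ (k : ℕ) (ws : Fin (k + 1) → G) (h : G),
    (∀ i, ws i ∈ W) ∧
    (∀ i, Subgroup.centralizer {g} = conjSub h (Subgroup.centralizer {ws i})) ∧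
    (IsAbelianSub (Subgroup.centralizer {g}) → k = 0)
  /-- (C6)(b): `C(w) = Z(w) × O(w)` -/
  c6b : ∀ w ∈ W, IsIDP (Z w) (O w) (Subgroup.centralizer {w})
  /-- (C6)(b)(i) -/
  c6bi : ∀ w ∈ W, IsAbelianSub (Subgroup.centralizer {w}) →
    IsCanonical X (Subgroup.centralizer {w}) →
    Z w = ⊥ ∧ O w = Subgroup.centralizer {w}
  /-- (C6)(b)(ii) -/
  c6bii : ∀ w ∈ W, IsAbelianSub (Subgroup.centralizer {w}) →
    ¬ IsCanonical X (Subgroup.centralizer {w}) →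
    (∃ z : G, Z w = Subgroup.zpowers z) ∧ ¬ IsCanonical X (Z w) ∧
    MaxCanonicalWith X (fun Y => Z w ≤ Subgroup.closure Y) (O w)
  /-- (C6)(b)(iii) -/
  c6biii : ∀ w ∈ W, ¬ IsAbelianSub (Subgroup.centralizer {w}) →
    MaxCanonicalWith X (fun Y => w ∈ Subgroup.closure Y) (O w)
  /-- (C6)(c) -/
  c6c : ∀ w ∈ W, ∀ g ∈ O w,
    ¬ AreConjSub (Subgroup.centralizer {w}) (Subgroup.centralizer ({g} : Set G)) →
    ∃ w₀ h : G, w₀ ∈ W ∧ w₀ ∈ O w ∧ h ∈ O w ∧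
      Subgroup.centralizer ({g} : Set G) = conjSub h (Subgroup.centralizer {w₀})
  /-- (C7) -/
  c7 : ∀ w ∈ W, IsAbelianSub (Subgroup.centralizer {w}) →
    ∀ a h : G, a ∈ Subgroup.centralizer ({w} : Set G) →
      h⁻¹ * a * h ∈ Subgroup.centralizer ({w} : Set G) →
      h ∉ Subgroup.centralizer ({w} : Set G) →
      a ∈ O w ∧ Commute h a
  /-- (C8) -/
  c8 : ∀ w ∈ W, ¬ IsAbelianSub (Subgroup.centralizer {w}) →
    IsCanonical X (Subgroup.centralizer {w}) ∧
    (∃ Yw : Set G, MinimalWith X (fun Y => w ∈ Subgroup.closure Y) Yw ∧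
      Z w = Subgroup.closure Yw) ∧
    IsCanonical X (subCenter (Subgroup.centralizer {w}))

/-- `G` belongs to the class `𝒞(X, W)`. -/
def MemClassC (G : Type*) [Group G] (X W : Set G) : Prop :=
  ∃ Z O : G → Subgroup G, ClassCWith G X W Z O

/-- `G` belongs to the class `𝒞`. -/
def InClassC (G : Type*) [Group G] : Prop :=
  ∃ X W : Set G, MemClassC G X W

/-- `H` is discriminated by (fully residually) `G`. -/
def DiscriminatedBy (H G : Type*) [Group H] [Group G] : Prop :=
  ∀ S : Finset H, (∀ x ∈ S, x ≠ 1) → ∃ f : H →* G, ∀ x ∈ S, f x ≠ 1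

/-- A finitely generated free abelian subgroup. -/
def IsFGFreeAbelianSub {G : Type*} [Group G] (H : Subgroup G) : Prop :=
  ∃ n : ℕ, Nonempty (H ≃* Multiplicative (Fin n → ℤ))

/-! By (C7), `O(w)` contains every element of `C(w)` that commutes with some
`h ∈ C(g) \ C(w)`; such an `h` exists because `C(w)` is abelian while `C(g) ⊇ C(w)` is
not. This covers `g` itself and the whole centre of `C(g)`. Then (C6)(c) yields `w₀ ∈ O(w)`
with `C(g)` a conjugate of `C(w₀)` by an element of the abelian group `O(w)` commuting with
`w₀`, so `C(g) = C(w₀)`. By (C8) both `C(w₀)` and its centre are canonical; a minimal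
generating set `Yg` of `g` inside the generators of the centre then splits off a direct
factor of `C(w₀)` by (C4). -/

open Subgroup

lemma mem_conjSub {G : Type*} [Group G] {h a : G} {H : Subgroup G} :
    a ∈ conjSub h H ↔ h⁻¹ * a * h ∈ H := by
  simp only [conjSub, mem_map_equiv, MulAut.conj_symm_apply]

lemma conjSub_eq_self {G : Type*} [Group G] {h : G} {H : Subgroup G} (hh : h ∈ H) :
    conjSub h H = H := by
  ext a
  rw [mem_conjSub, mul_mem_cancel_right hh, mul_mem_cancel_left (inv_mem hh)]

lemma IsAbelianSub.map {G N : Type*} [Group G] [Group N] {H : Subgroup G}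
    (hH : IsAbelianSub H) (f : G →* N) : IsAbelianSub (H.map f) := by
  rintro _ ⟨a, ha, rfl⟩ _ ⟨b, hb, rfl⟩
  rw [← map_mul, ← map_mul, hH a ha b hb]

lemma not_areConjSub_of_isAbelianSub {G : Type*} [Group G] {H K : Subgroup G}
    (hH : IsAbelianSub H) (hK : ¬ IsAbelianSub K) : ¬ AreConjSub H K := by
  rintro ⟨h, rfl⟩
  exact hK (hH.map _)

lemma exists_mem_not_mem_of_isAbelianSub {G : Type*} [Group G] {H K : Subgroup G}
    (hH : IsAbelianSub H) (hK : ¬ IsAbelianSub K) : ∃ h ∈ K, h ∉ H := by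
  by_contra! hKH
  exact hK fun a ha b hb => hH a (hKH a ha) b (hKH b hb)

lemma IsAbelianSub.le_centralizer {G : Type*} [Group G] {H : Subgroup G}
    (hH : IsAbelianSub H) {g : G} (hg : g ∈ H) : H ≤ centralizer {g} :=
  fun x hx => mem_centralizer_singleton_iff.mpr (hH x hx g hg)

lemma mem_subCenter {G : Type*} [Group G] {H : Subgroup G} {a : G} :
    a ∈ subCenter H ↔ a ∈ H ∧ ∀ x ∈ H, x * a = a * x :=
  Iff.rfl

lemma mem_subCenter_centralizer_self {G : Type*} [Group G] (g : G) :
    g ∈ subCenter (centralizer {g}) :=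
  mem_subCenter.mpr ⟨mem_centralizer_singleton_iff.mpr rfl, fun _ hx =>
    mem_centralizer_singleton_iff.mp hx⟩

lemma exists_finite_subset_of_mem_closure {G : Type*} [Group G] {S : Set G} {g : G}
    (hg : g ∈ closure S) : ∃ T ⊆ S, T.Finite ∧ g ∈ closure T := by
  induction hg using closure_induction with
  | mem x hx => exact ⟨{x}, Set.singleton_subset_iff.mpr hx, Set.finite_singleton x, subset_closure rfl⟩
  | one => exact ⟨∅, Set.empty_subset S, Set.finite_empty, one_mem _⟩
  | mul x y _ _ hx hy =>
    obtain ⟨T, hTS, hT, hxT⟩ := hx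
    obtain ⟨T', hT'S, hT', hyT'⟩ := hy
    exact ⟨T ∪ T', Set.union_subset hTS hT'S, hT.union hT',
      mul_mem (closure_mono Set.subset_union_left hxT)
        (closure_mono Set.subset_union_right hyT')⟩
  | inv x _ hx =>
    obtain ⟨T, hTS, hT, hxT⟩ := hx
    exact ⟨T, hTS, hT, inv_mem hxT⟩

lemma exists_minimalWith_mem_closure {G : Type*} [Group G] {X S : Set G} (hSX : S ⊆ X)
    {g : G} (hg : g ∈ closure S) :
    ∃ Y ⊆ S, MinimalWith X (fun Y => g ∈ closure Y) Y := by
  obtain ⟨T, hTS, hT, hgT⟩ := exists_finite_subset_of_mem_closure hg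
  have hfin : {Y | Y ⊆ T ∧ g ∈ closure Y}.Finite :=
    hT.finite_subsets.subset fun _ hY => hY.1
  obtain ⟨Y, hYT, hmin⟩ := hfin.exists_le_minimal ⟨subset_rfl, hgT⟩
  refine ⟨Y, hYT.trans hTS, hYT.trans (hTS.trans hSX), hmin.prop.2, fun Y' hY'Y hgY' => ?_⟩
  exact hY'Y.antisymm (hmin.le_of_le ⟨hY'Y.trans hYT, hgY'⟩ hY'Y)

namespace ClassCWith

variable {G : Type*} [Group G] {X W : Set G} {Z O : G → Subgroup G}
  (hG : ClassCWith G X W Z O) {w : G}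
include hG

lemma O_le_centralizer (hw : w ∈ W) : O w ≤ centralizer {w} :=
  (hG.c6b w hw).2.2 ▸ le_sup_right

lemma mem_O_of_commute (hw : w ∈ W) (hab : IsAbelianSub (centralizer {w})) {a h : G}
    (ha : a ∈ centralizer {w}) (hh : h ∉ centralizer {w}) (hha : Commute h a) : a ∈ O w :=
  (hG.c7 w hw hab a h ha (hha.inv_mul_cancel.symm ▸ ha) hh).1

lemma subCenter_centralizer_le_O (hw : w ∈ W) (hab : IsAbelianSub (centralizer {w})) {g : G}
    (hg : g ∈ centralizer {w}) (hgna : ¬ IsAbelianSub (centralizer {g})) :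
    subCenter (centralizer {g}) ≤ O w := by
  obtain ⟨h, hhg, hhw⟩ := exists_mem_not_mem_of_isAbelianSub hab hgna
  have hwg : w ∈ centralizer {g} := hab.le_centralizer hg (mem_centralizer_singleton_iff.mpr rfl)
  intro a ha
  obtain ⟨-, ha⟩ := mem_subCenter.mp ha
  exact hG.mem_O_of_commute hw hab (mem_centralizer_singleton_iff.mpr (ha w hwg).symm) hhw
    (ha h hhg)

lemma exists_centralizer_eq (hw : w ∈ W) (hab : IsAbelianSub (centralizer {w})) {g : G}
    (hgO : g ∈ O w) (hgna : ¬ IsAbelianSub (centralizer {g})) :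
    ∃ w₀ ∈ W, w₀ ∈ O w ∧ centralizer {g} = centralizer {w₀} := by
  obtain ⟨w₀, h, hw₀, hw₀O, hhO, hconj⟩ :=
    hG.c6c w hw g hgO (not_areConjSub_of_isAbelianSub hab hgna)
  have hhw₀ : h ∈ centralizer {w₀} := mem_centralizer_singleton_iff.mpr
    (hab h (hG.O_le_centralizer hw hhO) w₀ (hG.O_le_centralizer hw hw₀O))
  exact ⟨w₀, hw₀, hw₀O, hconj.trans (conjSub_eq_self hhw₀)⟩

lemma isIDP_closure_diff {U Y : Set G} {L : Subgroup G} (hUX : U ⊆ X) (hL : L = closure U)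
    (hYX : Y ⊆ X) (hYL : closure Y ≤ subCenter L) : IsIDP (closure Y) (closure (U \ Y)) L := by
  have hYcentral (y) (hy : y ∈ Y) := mem_subCenter.mp (hYL (subset_closure hy))
  have hYU : Y ⊆ U := fun y hy => hG.c4b y (hYX hy) U hUX (hL ▸ (hYcentral y hy).1)
  have hcomm : ∀ y ∈ Y, ∀ u ∈ U \ Y, Commute y u := fun y hy u hu =>
    ((hYcentral y hy).2 u (hL ▸ subset_closure hu.1)).symm
  have h := hG.c4a Y (U \ Y) hYX (Set.sdiff_subset.trans hUX) Set.disjoint_sdiff_right hcomm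
  rwa [Set.union_sdiff_cancel hYU, ← hL] at h

end ClassCWith

/-- Lemma 3.9. Let `G` be in class `𝒞(X, W)` (with centraliser
decompositions `Z`, `O`), let `w ∈ W` with `C(w)` abelian, and let `g ∈ C(w)`. If
`C(g)` is non-abelian then `g ∈ O(w)`, there is `w₀ ∈ W ∩ O(w)` with `C(g) = C(w₀)`,
and `C(g) = Z(g) × O(g)` is canonical with `Z(g) ≤ O(w)`. -/
theorem classC_intersect_centralizers (G : Type*) [Group G]
    (X W : Set G) (Z O : G → Subgroup G) (hG : ClassCWith G X W Z O)
    (w g : G) (hw : w ∈ W)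
    (hab : IsAbelianSub (Subgroup.centralizer {w}))
    (hg : g ∈ Subgroup.centralizer ({w} : Set G))
    (hgna : ¬ IsAbelianSub (Subgroup.centralizer ({g} : Set G))) :
    g ∈ O w ∧
    ∃ w₀ : G, w₀ ∈ W ∧ w₀ ∈ O w ∧
      Subgroup.centralizer ({g} : Set G) = Subgroup.centralizer {w₀} ∧
      ∃ Yg Kg : Set G, Kg ⊆ X ∧
        MinimalWith X (fun Y => g ∈ Subgroup.closure Y) Yg ∧
        Subgroup.closure Yg ≤ subCenter (Subgroup.centralizer {w₀}) ∧
        IsIDP (Subgroup.closure Yg) (Subgroup.closure Kg)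
          (Subgroup.centralizer ({g} : Set G)) ∧
        Subgroup.closure Yg ≤ O w := by
  have hcentre := hG.subCenter_centralizer_le_O hw hab hg hgna
  have hgO : g ∈ O w := hcentre (mem_subCenter_centralizer_self g)
  obtain ⟨w₀, hw₀, hw₀O, hgw₀⟩ := hG.exists_centralizer_eq hw hab hgO hgna
  obtain ⟨⟨U, hUX, hU⟩, -, Yc, hYcX, hYc⟩ := hG.c8 w₀ hw₀ (hgw₀ ▸ hgna)
  have hgYc : g ∈ closure Yc := hYc ▸ hgw₀ ▸ mem_subCenter_centralizer_self g
  obtain ⟨Yg, hYgYc, hYg⟩ := exists_minimalWith_mem_closure hYcX hgYc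
  have hYgc : closure Yg ≤ subCenter (centralizer {w₀}) := hYc ▸ closure_mono hYgYc
  refine ⟨hgO, w₀, hw₀, hw₀O, hgw₀, Yg, U \ Yg, Set.sdiff_subset.trans hUX, hYg, hYgc, ?_, ?_⟩
  · exact hgw₀ ▸ hG.isIDP_closure_diff hUX hU hYg.1 hYgc
  · exact hYgc.trans (hgw₀ ▸ hcentre)

end PaperBase
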